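/- Let θ, φ ∈ ℝ^d, δ > 0, and set η = 2(1+δ)(θ − φ) + φ. Assume 0 < z(φ) < ∞, z(η) < ∞, and that the sufficient statistic has the finite moment ∫ |T_k(x)|^{2(1+δ)/δ} dp_φ(x) < ∞ for a coordinate k. Then E_{Y∼p_φ}[ (T_k(Y) q_θ(Y)/q_φ(Y))² ] < ∞, i.e. the importance-sampling estimate of the k-th coordinate of ∇_θ z(θ) based on draws from p_φ has finite variance. (The proof is via Hölder's inequality with exponents a = 1+δ and b = (1+δ)/δ.) -/

import Mathlib

/-!
Write `s_ψ = ⟨ψ, T⟩ + H`, so `q_ψ = exp s_ψ`, and let `a = 1 + δ`, `b = (1 + δ)/δ`, which are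
Hölder conjugate. Against `p_φ` the integrand is `T_k² exp (2 s_θ - s_φ) / z(φ)`, and since
`s_η = 2a (s_θ - s_φ) + s_φ` and `1/a + 1/b = 1` this is, up to `z(φ)`, the product of
`exp (s_η / a) ∈ L^a(μ)` (because `z(η) < ∞`) and `T_k² exp (s_φ / b) ∈ L^b(μ)` (by the moment
assumption). Hölder's inequality finishes the proof.
-/

open MeasureTheory Real

namespace MeasureTheory

variable {α : Type*} [MeasurableSpace α] {μ : Measure α}

theorem Integrable.mul_of_integrable_norm_rpow {p q : ℝ} (hpq : p.HolderConjugate q)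
    {f g : α → ℝ} (hf : AEStronglyMeasurable f μ) (hg : AEStronglyMeasurable g μ)
    (hfp : Integrable (fun x => ‖f x‖ ^ p) μ) (hgq : Integrable (fun x => ‖g x‖ ^ q) μ) :
    Integrable (f * g) μ := by
  have := hpq.ennrealOfReal
  rw [← ENNReal.toReal_ofReal hpq.nonneg,
    integrable_norm_rpow_iff hf (by simp [hpq.pos]) ENNReal.ofReal_ne_top] at hfp
  rw [← ENNReal.toReal_ofReal hpq.symm.nonneg,
    integrable_norm_rpow_iff hg (by simp [hpq.symm.pos]) ENNReal.ofReal_ne_top] at hgq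
  exact hfp.integrable_mul hgq

theorem integrable_withDensity_ofReal_div_iff {ρ : α → ℝ} (hρ : Measurable ρ)
    (hρ_nonneg : ∀ x, 0 ≤ ρ x) {c : ℝ} (hc : 0 < c) {g : α → ℝ} :
    Integrable g (μ.withDensity fun x => ENNReal.ofReal (ρ x / c)) ↔
      Integrable (fun x => g x * ρ x) μ := by
  rw [integrable_withDensity_iff (hρ.div_const c).ennreal_ofReal
    (ae_of_all _ fun _ => ENNReal.ofReal_lt_top)]
  simp_rw [ENNReal.toReal_ofReal (div_nonneg (hρ_nonneg _) hc.le), div_eq_mul_inv, ← mul_assoc]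
  exact integrable_mul_const_iff (isUnit_iff_ne_zero.2 (inv_ne_zero hc.ne')) _

end MeasureTheory

lemma Real.mul_exp_div_exp_sq_mul_exp (t u v : ℝ) :
    (t * exp u / exp v) ^ 2 * exp v = t ^ 2 * exp (2 * u - v) := by
  rw [two_mul, exp_sub, exp_add]
  field_simp

theorem integrable_sq_mul_exp_of_holderConjugate {α : Type*} [MeasurableSpace α]
    {μ : Measure α} {a b : ℝ} (hab : a.HolderConjugate b)
    {t u v : α → ℝ} (ht : Measurable t) (hu : Measurable u) (hv : Measurable v)
    (hexp : Integrable (fun x => exp (2 * a * (u x - v x) + v x)) μ)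
    (hmom : Integrable (fun x => |t x| ^ (2 * b) * exp (v x)) μ) :
    Integrable (fun x => (t x * exp (u x) / exp (v x)) ^ 2 * exp (v x)) μ := by
  have hf (x) : ‖exp ((2 * a * (u x - v x) + v x) / a)‖ ^ a = exp (2 * a * (u x - v x) + v x) := by
    rw [norm_of_nonneg (exp_pos _).le, ← exp_mul, div_mul_cancel₀ _ hab.ne_zero]
  have hg (x) : ‖t x ^ 2 * exp (v x / b)‖ ^ b = |t x| ^ (2 * b) * exp (v x) := by
    rw [norm_mul, norm_pow, norm_of_nonneg (exp_pos _).le, Real.norm_eq_abs,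
      mul_rpow (by positivity) (exp_pos _).le, ← exp_mul, div_mul_cancel₀ _ hab.symm.ne_zero,
      ← rpow_natCast, ← rpow_mul (abs_nonneg _), Nat.cast_ofNat]
  have hfg := Integrable.mul_of_integrable_norm_rpow hab (by fun_prop) (by fun_prop)
    (hexp.congr (ae_of_all _ fun x => (hf x).symm)) (hmom.congr (ae_of_all _ fun x => (hg x).symm))
  refine hfg.congr (ae_of_all _ fun x => ?_)
  have hab_inv := hab.inv_add_inv_eq_one
  have ha := hab.ne_zero
  have hb := hab.symm.ne_zero
  simp only [Pi.mul_apply, mul_exp_div_exp_sq_mul_exp]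
  rw [mul_left_comm, ← exp_add]
  congr 2
  field_simp at hab_inv ⊢
  linear_combination v x * hab_inv

theorem importance_sampling_gradient_finite_variance_general
    {X : Type*} [MeasurableSpace X] (μ : Measure X)
    {d : ℕ} (T : X → Fin d → ℝ) (H : X → ℝ)
    (hT : Measurable T) (hH : Measurable H)
    (q : (Fin d → ℝ) → X → ℝ)
    (hq : ∀ η x, q η x = Real.exp ((∑ i, η i * T x i) + H x))
    (z : (Fin d → ℝ) → ℝ)
    (θ φ : Fin d → ℝ) (δ : ℝ) (hδ : 0 < δ)
    (η : Fin d → ℝ) (hη : η = (2 * (1 + δ)) • (θ - φ) + φ)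
    (hzφ : 0 < z φ)
    (hηint : Integrable (q η) μ)
    (k : Fin d)
    (hmom : Integrable (fun x => |T x k| ^ (2 * (1 + δ) / δ))
      (μ.withDensity fun x => ENNReal.ofReal (q φ x / z φ))) :
    Integrable (fun x => (T x k * q θ x / q φ x) ^ 2)
      (μ.withDensity fun x => ENNReal.ofReal (q φ x / z φ)) := by
  set s : (Fin d → ℝ) → X → ℝ := fun ψ x => ∑ i, ψ i * T x i + H x
  have hq_eq (ψ) : q ψ = fun x => exp (s ψ x) := funext (hq ψ)
  have hs_meas (ψ) : Measurable (s ψ) := by fun_prop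
  have hs_η (x) : s η x = 2 * (1 + δ) * (s θ x - s φ x) + s φ x := by
    simp only [s, hη, Pi.add_apply, Pi.smul_apply, Pi.sub_apply, smul_eq_mul, add_mul, sub_mul,
      Finset.sum_add_distrib, Finset.sum_sub_distrib, mul_assoc, ← Finset.mul_sum]
    ring
  have hab : (1 + δ).HolderConjugate ((1 + δ) / δ) :=
    holderConjugate_iff.2 ⟨by linarith, by field_simp⟩
  rw [hq_eq φ, integrable_withDensity_ofReal_div_iff (hs_meas φ).exp
    (fun _ => (exp_pos _).le) hzφ] at hmom ⊢
  rw [hq_eq θ]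
  rw [hq_eq η] at hηint
  simp_rw [hs_η, mul_div_assoc] at hηint hmom
  exact integrable_sq_mul_exp_of_holderConjugate hab (by fun_prop) (hs_meas θ) (hs_meas φ)
    hηint hmom

/-- Finite variance of the importance-sampling estimate of the k-th
coordinate of `∇_θ z(θ)` under the proposal `p_φ`: with `η = 2(1+δ)(θ−φ)+φ`, if
`z(η) < ∞` and `∫ |T_k|^{2(1+δ)/δ} dp_φ < ∞`, then
`E_{Y∼p_φ}[(T_k(Y) q_θ(Y)/q_φ(Y))²] < ∞`. -/
theorem importance_sampling_gradient_finite_variance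
    {X : Type*} [MeasurableSpace X] (μ : Measure X) [SigmaFinite μ]
    {d : ℕ} (T : X → Fin d → ℝ) (H : X → ℝ)
    (hT : Measurable T) (hH : Measurable H)
    (q : (Fin d → ℝ) → X → ℝ)
    (hq : ∀ η x, q η x = Real.exp ((∑ i, η i * T x i) + H x))
    (z : (Fin d → ℝ) → ℝ)
    (hz : ∀ η, z η = ∫ x, q η x ∂μ)
    (θ φ : Fin d → ℝ) (δ : ℝ) (hδ : 0 < δ)
    (η : Fin d → ℝ) (hη : η = (2 * (1 + δ)) • (θ - φ) + φ)
    (hφint : Integrable (q φ) μ) (hzφ : 0 < z φ)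
    (hηint : Integrable (q η) μ)
    (k : Fin d)
    (hmom : Integrable (fun x => |T x k| ^ (2 * (1 + δ) / δ))
      (μ.withDensity fun x => ENNReal.ofReal (q φ x / z φ))) :
    Integrable (fun x => (T x k * q θ x / q φ x) ^ 2)
      (μ.withDensity fun x => ENNReal.ofReal (q φ x / z φ)) :=
  importance_sampling_gradient_finite_variance_general μ T H hT hH q hq z θ φ δ hδ η hη hzφ hηint k
    hmom
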